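/- arXiv:2004.07572 — 4 statements merged into one kernel-verified Lean document; each statement's English description precedes it below -/
import Mathlib

section
/- Let G = (V,E,w) be a weighted graph with adjacency matrix A (A_{kj} = w(k,j) if {k,j} ∈ E, A_{jj}=0, and ∞ otherwise), and let S ⊆ V with |S| = s. Suppose B is an s×n matrix such that for every i ∈ S and j ∈ V, B_{ij} is a c-approximation of d_G^{(t)}(i,j), the length of the shortest path from i to j using at most t edges. Let C = B ⋆ A be the distance product, and let C' be a c'-approximation of C. Then for all i ∈ S and j ∈ V, C'_{ij} is a (c·c')-approximation of d_G^{(t+1)}(i,j). -/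
/-!
With a zero diagonal, staying put is a zero-weight step, so the `(t+1)`-bounded distance is
exactly the min-plus product of the `t`-bounded distances with `A`. The lower bound is then
monotonicity of that product. For the upper bound, evaluate the product at a minimising
intermediate vertex `k`, where `B i k ≤ c · d⁽ᵗ⁾(i,k)` and `c ≥ 1` also covers the edge `A k j`.
-/

open scoped ENNReal

/-- `hopDist w t u v` is the minimum weight of a `u`–`v` walk with at most `t`
edges, where `w` is the (extended-real-valued) adjacency matrix. -/
noncomputable def hopDist {V : Type*} [Fintype V] [DecidableEq V]
    (w : V → V → ℝ≥0∞) : ℕ → V → V → ℝ≥0∞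
  | 0 => fun u v => if u = v then 0 else ⊤
  | t + 1 => fun u v => min (hopDist w t u v) (⨅ k, hopDist w t u k + w k v)

lemma hopDist_succ_of_diag_eq_zero {V : Type*} [Fintype V] [DecidableEq V]
    {A : V → V → ℝ≥0∞} (hdiag : ∀ v, A v v = 0) (t : ℕ) (u v : V) :
    hopDist A (t + 1) u v = ⨅ k, hopDist A t u k + A k v := by
  refine le_antisymm (min_le_right _ _) (le_min ?_ le_rfl)
  calc (⨅ k, hopDist A t u k + A k v) ≤ hopDist A t u v + A v v := iInf_le _ v
    _ = hopDist A t u v := by rw [hdiag, add_zero]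

lemma ENNReal.iInf_add_le_mul_iInf_add {ι : Type*} [Finite ι] [Nonempty ι] {c : ℝ≥0∞}
    (hc : 1 ≤ c) {b d a : ι → ℝ≥0∞} (hbd : ∀ k, b k ≤ c * d k) :
    ⨅ k, b k + a k ≤ c * ⨅ k, d k + a k := by
  obtain ⟨k₀, hk₀⟩ := exists_eq_ciInf_of_finite (f := fun k => d k + a k)
  calc ⨅ k, b k + a k ≤ b k₀ + a k₀ := iInf_le _ k₀
    _ ≤ c * d k₀ + c * a k₀ := add_le_add (hbd k₀) (le_mul_of_one_le_left' hc)
    _ = c * ⨅ k, d k + a k := by rw [← mul_add, hk₀]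

theorem stmt_1_general {V S : Type*} [Fintype V] [DecidableEq V]
    (A : V → V → ℝ≥0∞) (hdiag : ∀ v, A v v = 0) (f : S → V) (t : ℕ)
    (c c' : ℝ≥0∞) (hc : 1 ≤ c)
    (B : S → V → ℝ≥0∞)
    (hB : ∀ i j, hopDist A t (f i) j ≤ B i j ∧ B i j ≤ c * hopDist A t (f i) j)
    (C' : S → V → ℝ≥0∞)
    (hC' : ∀ i j, (⨅ k, B i k + A k j) ≤ C' i j ∧
        C' i j ≤ c' * ⨅ k, B i k + A k j) :
    ∀ i j, hopDist A (t + 1) (f i) j ≤ C' i j ∧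
      C' i j ≤ c * c' * hopDist A (t + 1) (f i) j := by
  intro i j
  have : Nonempty V := ⟨j⟩
  rw [hopDist_succ_of_diag_eq_zero hdiag]
  refine ⟨(iInf_mono fun k => add_le_add_left (hB i k).1 _).trans (hC' i j).1, ?_⟩
  calc C' i j ≤ c' * ⨅ k, B i k + A k j := (hC' i j).2
    _ ≤ c' * (c * ⨅ k, hopDist A t (f i) k + A k j) :=
        mul_le_mul_right (ENNReal.iInf_add_le_mul_iInf_add hc fun k => (hB i k).2) _
    _ = c * c' * ⨅ k, hopDist A t (f i) k + A k j := by ring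

/-- one approximate min-plus product with the adjacency matrix
turns `c`-approximate `t`-bounded distances into `c·c'`-approximate
`(t+1)`-bounded distances. -/
theorem stmt_1 {V S : Type*} [Fintype V] [DecidableEq V] [Nonempty V]
    (A : V → V → ℝ≥0∞) (hdiag : ∀ v, A v v = 0) (f : S → V) (t : ℕ)
    (c c' : ℝ≥0∞) (hc : 1 ≤ c) (hc' : 1 ≤ c')
    (B : S → V → ℝ≥0∞)
    (hB : ∀ i j, hopDist A t (f i) j ≤ B i j ∧ B i j ≤ c * hopDist A t (f i) j)
    (C' : S → V → ℝ≥0∞)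
    (hC' : ∀ i j, (⨅ k, B i k + A k j) ≤ C' i j ∧
        C' i j ≤ c' * ⨅ k, B i k + A k j) :
    ∀ i j, hopDist A (t + 1) (f i) j ≤ C' i j ∧
      C' i j ≤ c * c' * hopDist A (t + 1) (f i) j :=
  stmt_1_general A hdiag f t c c' hc B hB C' hC'
end

section
/- Let G be a weighted undirected graph and H a (1+ε, β)-hopset for G, i.e., for all u,v ∈ V: d_G(u,v) ≤ d_{G∪H}^{(β)}(u,v) ≤ (1+ε)·d_G(u,v). Let A be the adjacency matrix of G ∪ H, S ⊆ V, B^{(1)} = A restricted to rows in S, and inductively let B^{(t+1)} be any (1+1/R)-approximation of B^{(t)} ⋆ A. Then for all u ∈ S and v ∈ V, B^{(β)}_{uv} satisfies d_G(u,v) ≤ B^{(β)}_{uv} ≤ (1+1/R)^{β-1}·(1+ε)·d_G(u,v). -/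
open scoped ENNReal

/-- The (unbounded) graph distance induced by adjacency matrix `w`. -/
noncomputable def gDist {V : Type*} [Fintype V] [DecidableEq V]
    (w : V → V → ℝ≥0∞) (u v : V) : ℝ≥0∞ :=
  ⨅ t : ℕ, hopDist w t u v

/-!
By induction on `t`, `B t` lies between `d_G` and `(1+1/R)^(t-1)` times the
`t`-hop distance in `G ∪ H`. The lower bound holds because `d_G` is a metric lying below every
edge weight of `G ∪ H`; for the upper bound, since the diagonal of `A` vanishes, the `t`-hop
distances are exactly the iterated distance products `A ⋆ ⋯ ⋆ A`, and each approximate product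
loses one factor `1+1/R`. At `t = β` the hopset property bounds the hop distance by
`(1+ε) d_G`.
-/

/-- The distance product `X ⋆ A`. -/
noncomputable def minPlus {ι V : Type*} (X : ι → V → ℝ≥0∞) (A : V → V → ℝ≥0∞)
    (i : ι) (j : V) : ℝ≥0∞ :=
  ⨅ k, X i k + A k j

theorem ENNReal.iInf_add_le_mul_iInf_add_s2 {ι : Type*} [Finite ι] {a : ℝ≥0∞} (ha : 1 ≤ a)
    {x y z : ι → ℝ≥0∞} (h : ∀ k, x k ≤ a * y k) :
    ⨅ k, x k + z k ≤ a * ⨅ k, y k + z k := by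
  rcases isEmpty_or_nonempty ι with _ | _
  · simp [iInf_of_empty, ENNReal.mul_top (one_pos.trans_le ha).ne']
  obtain ⟨k, hk⟩ := exists_eq_ciInf_of_finite (f := fun k => y k + z k)
  rw [← hk, mul_add]
  exact (iInf_le _ k).trans (add_le_add (h k) (le_mul_of_one_le_left' ha))

section

variable {V : Type*} [Fintype V] [DecidableEq V] (w : V → V → ℝ≥0∞)

theorem hopDist_add_le (s t : ℕ) (u k v : V) :
    hopDist w (s + t) u v ≤ hopDist w s u k + hopDist w t k v := by
  induction t generalizing v with
  | zero => by_cases h : k = v <;> simp [hopDist, h]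
  | succ t ih =>
    change min _ _ ≤ hopDist w s u k + min _ _
    rw [← min_add_add_left]
    refine min_le_min (ih v) ?_
    rw [ENNReal.add_iInf]
    refine iInf_mono fun m => ?_
    rw [← add_assoc]
    exact add_le_add_left (ih m) _

theorem gDist_triangle (u k v : V) : gDist w u v ≤ gDist w u k + gDist w k v := by
  simp only [gDist, ENNReal.iInf_add, ENNReal.add_iInf]
  exact le_iInf₂ fun t s => (iInf_le _ (s + t)).trans (hopDist_add_le w s t u k v)

theorem gDist_le (u v : V) : gDist w u v ≤ w u v := by
  refine (iInf_le _ 1).trans (min_le_of_right_le ((iInf_le _ u).trans ?_))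
  simp [hopDist]

variable {w}

/-- With a zero diagonal, "at most `t + 1` hops" is the same as "exactly one more hop". -/
theorem hopDist_succ_of_diag (hw : ∀ v, w v v = 0) (t : ℕ) :
    hopDist w (t + 1) = minPlus (hopDist w t) w := by
  ext u v
  refine min_eq_right ((iInf_le _ v).trans ?_)
  rw [hw v, add_zero]

theorem hopDist_one_of_diag (hw : ∀ v, w v v = 0) (u v : V) : hopDist w 1 u v = w u v := by
  rw [hopDist_succ_of_diag hw]
  refine le_antisymm ((iInf_le _ u).trans (by simp [hopDist])) (le_iInf fun k => ?_)
  by_cases h : u = k <;> simp [hopDist, h]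

theorem gDist_le_of_le_minPlus {ι : Type*} {A : V → V → ℝ≥0∞}
    (hA : ∀ u v, gDist w u v ≤ A u v) (f : ι → V) {B : ℕ → ι → V → ℝ≥0∞}
    (hB1 : ∀ i j, A (f i) j ≤ B 1 i j)
    (hstep : ∀ t, 1 ≤ t → ∀ i j, minPlus (B t) A i j ≤ B (t + 1) i j) :
    ∀ t, 1 ≤ t → ∀ i j, gDist w (f i) j ≤ B t i j := by
  intro t ht
  induction t, ht using Nat.le_induction with
  | base => exact fun i j => (hA _ _).trans (hB1 i j)
  | succ t ht ih =>
    refine fun i j => le_trans (le_iInf fun k => ?_) (hstep t ht i j)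
    exact (gDist_triangle w (f i) k j).trans (add_le_add (ih i k) (hA k j))

end

theorem le_pow_mul_hopDist_of_minPlus_le {V ι : Type*} [Fintype V] [DecidableEq V]
    {A : V → V → ℝ≥0∞} (hA : ∀ v, A v v = 0) (f : ι → V) {c : ℝ≥0∞} (hc : 1 ≤ c)
    {B : ℕ → ι → V → ℝ≥0∞} (hB1 : ∀ i j, B 1 i j ≤ A (f i) j)
    (hstep : ∀ t, 1 ≤ t → ∀ i j, B (t + 1) i j ≤ c * minPlus (B t) A i j) :
    ∀ t, 1 ≤ t → ∀ i j, B t i j ≤ c ^ (t - 1) * hopDist A t (f i) j := by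
  intro t ht
  induction t, ht using Nat.le_induction with
  | base => simpa [hopDist_one_of_diag hA] using hB1
  | succ t ht ih =>
    intro i j
    calc B (t + 1) i j ≤ c * minPlus (B t) A i j := hstep t ht i j
      _ ≤ c * (c ^ (t - 1) * minPlus (hopDist A t) A (f i) j) := by
          gcongr
          exact ENNReal.iInf_add_le_mul_iInf_add_s2 (one_le_pow₀ hc) (ih i)
      _ = c ^ (t + 1 - 1) * hopDist A (t + 1) (f i) j := by
          rw [hopDist_succ_of_diag hA, ← mul_assoc, ← pow_succ', Nat.sub_add_cancel ht,
            Nat.add_sub_cancel]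

theorem stmt_2_general {V S : Type*} [Fintype V] [DecidableEq V]
    (wG wH : V → V → ℝ≥0∞) (hGdiag : ∀ v, wG v v = 0)
    (hHge : ∀ u v, gDist wG u v ≤ wH u v)
    (ε : ℝ≥0∞) (β : ℕ) (hβ : 1 ≤ β)
    (hhopset : ∀ u v,
      gDist wG u v ≤ hopDist (fun a b => min (wG a b) (wH a b)) β u v ∧
        hopDist (fun a b => min (wG a b) (wH a b)) β u v ≤ (1 + ε) * gDist wG u v)
    (f : S → V) (R : ℝ≥0∞)
    (B : ℕ → S → V → ℝ≥0∞)
    (hB1 : ∀ i j, B 1 i j = min (wG (f i) j) (wH (f i) j))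
    (hBstep : ∀ t, 1 ≤ t → ∀ i j,
      (⨅ k, B t i k + min (wG k j) (wH k j)) ≤ B (t + 1) i j ∧
        B (t + 1) i j ≤ (1 + 1 / R) * ⨅ k, B t i k + min (wG k j) (wH k j)) :
    ∀ i j, gDist wG (f i) j ≤ B β i j ∧
      B β i j ≤ (1 + 1 / R) ^ (β - 1) * (1 + ε) * gDist wG (f i) j := by
  have hA : ∀ u v, gDist wG u v ≤ min (wG u v) (wH u v) := fun u v =>
    le_min (gDist_le wG u v) (hHge u v)
  have hAdiag : ∀ v, min (wG v v) (wH v v) = 0 := fun v => by simp [hGdiag v]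
  intro i j
  refine ⟨gDist_le_of_le_minPlus hA f (fun i j => (hB1 i j).ge)
    (fun t ht i j => (hBstep t ht i j).1) β hβ i j, ?_⟩
  calc B β i j ≤ (1 + 1 / R) ^ (β - 1) * hopDist (fun a b => min (wG a b) (wH a b)) β (f i) j :=
        le_pow_mul_hopDist_of_minPlus_le hAdiag f le_self_add (fun i j => (hB1 i j).le)
          (fun t ht i j => (hBstep t ht i j).2) β hβ i j
    _ ≤ (1 + 1 / R) ^ (β - 1) * ((1 + ε) * gDist wG (f i) j) := by
        gcongr; exact (hhopset (f i) j).2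
    _ = (1 + 1 / R) ^ (β - 1) * (1 + ε) * gDist wG (f i) j := (mul_assoc _ _ _).symm

/-- iterating `β - 1` approximate distance products with the
adjacency matrix of `G ∪ H`, starting from the source rows, yields
`(1+1/R)^(β-1)·(1+ε)`-approximate distances for `S × V`, where `H` is a
`(1+ε,β)`-hopset for `G`. -/
theorem stmt_2 {V S : Type*} [Fintype V] [DecidableEq V] [Nonempty V]
    (wG wH : V → V → ℝ≥0∞) (hGdiag : ∀ v, wG v v = 0)
    (hHge : ∀ u v, gDist wG u v ≤ wH u v)
    (ε : ℝ≥0∞) (β : ℕ) (hβ : 1 ≤ β)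
    (hhopset : ∀ u v,
      gDist wG u v ≤ hopDist (fun a b => min (wG a b) (wH a b)) β u v ∧
        hopDist (fun a b => min (wG a b) (wH a b)) β u v ≤ (1 + ε) * gDist wG u v)
    (f : S → V) (R : ℝ≥0∞) (hR : 1 ≤ R)
    (B : ℕ → S → V → ℝ≥0∞)
    (hB1 : ∀ i j, B 1 i j = min (wG (f i) j) (wH (f i) j))
    (hBstep : ∀ t, 1 ≤ t → ∀ i j,
      (⨅ k, B t i k + min (wG k j) (wH k j)) ≤ B (t + 1) i j ∧
        B (t + 1) i j ≤ (1 + 1 / R) * ⨅ k, B t i k + min (wG k j) (wH k j)) :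
    ∀ i j, gDist wG (f i) j ≤ B β i j ∧
      B β i j ≤ (1 + 1 / R) ^ (β - 1) * (1 + ε) * gDist wG (f i) j :=
  stmt_2_general wG wH hGdiag hHge ε β hβ hhopset f R B hB1 hBstep
end

section
/- Let A be an s×n matrix and B an n×n matrix with entries in {1,...,M} ∪ {∞} for a positive integer M. Define Â_{ij} = (n+1)^{M - A_{ij}} (and 0 when A_{ij} = ∞), and B̂ similarly. Let Ĉ = Â·B̂ be the ordinary matrix product over the integers. Then for all i,j with (A ⋆ B)_{ij} ≤ 2M, the distance product satisfies (A ⋆ B)_{ij} = 2M − ⌊log_{n+1} Ĉ_{ij}⌋. -/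
/-- the Alon–Galil–Margalit reduction. Encoding a matrix with
entries in `{1,…,M} ∪ {∞}` by `Âᵢⱼ = (n+1)^(M - Aᵢⱼ)` (and `0` for `∞`),
the min-plus product can be read off from the ordinary integer product:
whenever `(A ⋆ B)ᵢⱼ ≤ 2M`, one has `(A ⋆ B)ᵢⱼ = 2M - ⌊log_{n+1} Ĉᵢⱼ⌋`. -/
theorem stmt_4 {s ι q : Type*} [Fintype ι] [Nonempty ι]
    (M : ℕ) (hM : 0 < M)
    (A : s → ι → ℕ∞) (B : ι → q → ℕ∞)
    (hA : ∀ i j, A i j = ⊤ ∨ (1 ≤ A i j ∧ A i j ≤ (M : ℕ∞)))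
    (hB : ∀ i j, B i j = ⊤ ∨ (1 ≤ B i j ∧ B i j ≤ (M : ℕ∞)))
    (Ahat : s → ι → ℕ) (Bhat : ι → q → ℕ)
    (hAhat : ∀ i j, Ahat i j =
      if A i j = ⊤ then 0 else (Fintype.card ι + 1) ^ (M - (A i j).toNat))
    (hBhat : ∀ i j, Bhat i j =
      if B i j = ⊤ then 0 else (Fintype.card ι + 1) ^ (M - (B i j).toNat))
    (i : s) (j : q)
    (hle : (⨅ k, A i k + B k j) ≤ (2 * M : ℕ∞)) :
    (⨅ k, A i k + B k j) =
      ((2 * M - Nat.log (Fintype.card ι + 1) (∑ k, Ahat i k * Bhat k j) : ℕ) : ℕ∞) := by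
  classical
  set n := Fintype.card ι with hn
  have hnpos : 0 < n := Fintype.card_pos
  set c := ⨅ k, A i k + B k j with hc
  have hct : c ≠ ⊤ := by
    intro h
    rw [h, top_le_iff] at hle
    exact ENat.coe_ne_top (2 * M) (by push_cast; exact hle)
  set m := c.toNat with hm
  have hcm : c = (m : ℕ∞) := (ENat.coe_toNat hct).symm
  have hm2M : m ≤ 2 * M := by
    rw [hcm] at hle
    exact_mod_cast hle
  obtain ⟨k0, hk0⟩ := Finite.exists_min (fun k => A i k + B k j)
  have hck0 : A i k0 + B k0 j = c := le_antisymm (le_iInf hk0) (iInf_le _ k0)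
  -- finiteness facts
  have hAfin : A i k0 ≠ ⊤ := by
    intro h; rw [h] at hck0; simp at hck0; exact hct hck0.symm
  have hBfin : B k0 j ≠ ⊤ := by
    intro h; rw [h] at hck0; simp at hck0; exact hct hck0.symm
  -- helper for getting nat bounds
  have bounds : ∀ (x : ℕ∞), x ≠ ⊤ → (x = ⊤ ∨ (1 ≤ x ∧ x ≤ (M : ℕ∞))) →
      1 ≤ x.toNat ∧ x.toNat ≤ M := by
    intro x hx hor
    rcases hor with h | ⟨h1, h2⟩
    · exact absurd h hx
    constructor
    · have : (1 : ℕ∞) ≤ (x.toNat : ℕ∞) := by rwa [ENat.coe_toNat hx]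
      exact_mod_cast this
    · have : (x.toNat : ℕ∞) ≤ (M : ℕ∞) := by rwa [ENat.coe_toNat hx]
      exact_mod_cast this
  set X := (n + 1) ^ (2 * M - m) with hX
  -- each term is at most X
  have term_le : ∀ k, Ahat i k * Bhat k j ≤ X := by
    intro k
    rw [hAhat, hBhat]
    by_cases h1 : A i k = ⊤
    · simp [h1]
    by_cases h2 : B k j = ⊤
    · simp [h2]
    rw [if_neg h1, if_neg h2, ← pow_add]
    obtain ⟨ha1, ha2⟩ := bounds _ h1 (hA i k)
    obtain ⟨hb1, hb2⟩ := bounds _ h2 (hB k j)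
    apply pow_le_pow_right₀ (by omega)
    have hck : c ≤ A i k + B k j := iInf_le _ k
    have : (m : ℕ∞) ≤ (((A i k).toNat + (B k j).toNat : ℕ) : ℕ∞) := by
      rw [← hcm, Nat.cast_add, ENat.coe_toNat h1, ENat.coe_toNat h2]
      exact hck
    have hmk : m ≤ (A i k).toNat + (B k j).toNat := by exact_mod_cast this
    omega
  -- the k0 term equals X
  have term_k0 : Ahat i k0 * Bhat k0 j = X := by
    rw [hAhat, hBhat, if_neg hAfin, if_neg hBfin, ← pow_add]
    obtain ⟨ha1, ha2⟩ := bounds _ hAfin (hA i k0)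
    obtain ⟨hb1, hb2⟩ := bounds _ hBfin (hB k0 j)
    have : (((A i k0).toNat + (B k0 j).toNat : ℕ) : ℕ∞) = (m : ℕ∞) := by
      rw [← hcm, Nat.cast_add, ENat.coe_toNat hAfin, ENat.coe_toNat hBfin]
      exact hck0
    have hmk : (A i k0).toNat + (B k0 j).toNat = m := by exact_mod_cast this
    congr 1
    omega
  set S := ∑ k, Ahat i k * Bhat k j with hS
  have hlow : X ≤ S := by
    rw [← term_k0]
    exact Finset.single_le_sum (f := fun k => Ahat i k * Bhat k j) (fun k _ => Nat.zero_le _) (Finset.mem_univ k0)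
  have hXpos : 0 < X := pow_pos (by omega) _
  have hhigh : S < (n + 1) ^ (2 * M - m + 1) := by
    calc S ≤ n * X := by
            have := Finset.sum_le_card_nsmul Finset.univ (fun k => Ahat i k * Bhat k j) X
              (fun k _ => term_le k)
            simpa [smul_eq_mul] using this
      _ < (n + 1) * X := by
            exact (Nat.mul_lt_mul_right hXpos).mpr (by omega)
      _ = (n + 1) ^ (2 * M - m + 1) := by rw [hX, pow_succ]; ring
  have hlog : Nat.log (n + 1) S = 2 * M - m :=
    Nat.log_eq_of_pow_le_of_lt_pow hlow hhigh
  rw [hlog, hcm]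
  congr 1
  omega
end

section
/- Let G be a weighted graph, S ⊆ V, and suppose for matrices B (an S×V matrix of c-approximate t-bounded distances) and A (the adjacency matrix of G), C' is a c'-approximation of C = B ⋆ A with a witness matrix W, meaning C'_{ij} = B_{iW_{ij}} + A_{W_{ij} j} for all i,j. Then for each pair (i,j) with C'_{ij} < ∞, the vertex k = W_{ij} satisfies: (k,j) ∈ E and B_{ik} + w(k,j) = C'_{ij}, so an i→j walk of weight at most c·c'·d_G^{(t+1)}(i,j) can be obtained by appending edge (k,j) to any i→k walk of weight B_{ik}. -/
open scoped ENNReal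

/-- witness correctness for approximate distance products. If
`W` witnesses the entries of a `c'`-approximation `C'` of `B ⋆ A` (with `B`
holding `c`-approximate `t`-bounded distances and `A` the adjacency matrix),
then each finite entry `C' i j` decomposes as `B i k + w(k,j)` for the witness
`k = W i j`, where `(k,j)` is an edge, and this value is at most
`c·c'·d^(t+1)(i,j)`. -/
theorem stmt_16 {V S : Type*} [Fintype V] [DecidableEq V] [Nonempty V]
    (A : V → V → ℝ≥0∞) (hdiag : ∀ v, A v v = 0) (f : S → V) (t : ℕ)
    (c c' : ℝ≥0∞) (hc : 1 ≤ c) (hc' : 1 ≤ c')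
    (B : S → V → ℝ≥0∞)
    (hB : ∀ i j, hopDist A t (f i) j ≤ B i j ∧ B i j ≤ c * hopDist A t (f i) j)
    (C' : S → V → ℝ≥0∞)
    (hC' : ∀ i j, (⨅ k, B i k + A k j) ≤ C' i j ∧
        C' i j ≤ c' * ⨅ k, B i k + A k j)
    (W : S → V → V)
    (hW : ∀ i j, C' i j = B i (W i j) + A (W i j) j) :
    ∀ i j, C' i j < ⊤ →
      A (W i j) j ≠ ⊤ ∧ B i (W i j) + A (W i j) j = C' i j ∧
        B i (W i j) + A (W i j) j ≤ c * c' * hopDist A (t + 1) (f i) j := by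
  intro i j h
  have hAfin : A (W i j) j ≠ ⊤ := by
    intro hT
    rw [hW i j, hT, add_top] at h
    exact absurd h (lt_irrefl _)
  refine ⟨hAfin, (hW i j).symm, ?_⟩
  obtain ⟨k0, hk0⟩ := Finite.exists_min (fun k => hopDist A t (f i) k + A k j)
  have hinf : (⨅ k, hopDist A t (f i) k + A k j) = hopDist A t (f i) k0 + A k0 j :=
    le_antisymm (iInf_le _ _) (le_iInf hk0)
  have hhop : hopDist A (t+1) (f i) j = hopDist A t (f i) k0 + A k0 j := by
    show min (hopDist A t (f i) j) (⨅ k, hopDist A t (f i) k + A k j)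
        = hopDist A t (f i) k0 + A k0 j
    rw [min_eq_right, hinf]
    calc (⨅ k, hopDist A t (f i) k + A k j) ≤ hopDist A t (f i) j + A j j := iInf_le _ j
      _ = hopDist A t (f i) j := by rw [hdiag, add_zero]
  have hBA : (⨅ k, B i k + A k j) ≤ c * (hopDist A t (f i) k0 + A k0 j) := by
    calc (⨅ k, B i k + A k j) ≤ B i k0 + A k0 j := iInf_le _ _
      _ ≤ c * hopDist A t (f i) k0 + c * A k0 j :=
        add_le_add (hB i k0).2 (le_mul_of_one_le_left' hc)
      _ = c * (hopDist A t (f i) k0 + A k0 j) := (mul_add _ _ _).symm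
  rw [← hW i j]
  calc C' i j ≤ c' * ⨅ k, B i k + A k j := (hC' i j).2
    _ ≤ c' * (c * (hopDist A t (f i) k0 + A k0 j)) := mul_le_mul_right hBA _
    _ = c * c' * hopDist A (t + 1) (f i) j := by rw [hhop]; ring
end
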